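/- arXiv:1304.4067 — 4 statements merged into one kernel-verified Lean document; each statement's English description precedes it below -/
import Mathlib

section
/- Let φ, ψ : X → X be bijections with ψ² = φ, and let x have exact φ-period 2k. Then there is no r with 0 ≤ r ≤ 2k−1 such that ψ(x) = φ^r(x). -/
/-- If ψ² = φ and x has exact φ-period 2k, then ψ(x) ≠ φʳ(x) for all 0 ≤ r ≤ 2k-1. -/
theorem stmt_3 {X : Type*} (k : ℕ) (hk : 1 ≤ k) (φ ψ : Equiv.Perm X)
    (hsq : ψ * ψ = φ) (x : X)
    (hper : (φ ^ (2 * k)) x = x)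
    (hmin : ∀ j : ℕ, 1 ≤ j → j < 2 * k → (φ ^ j) x ≠ x) :
    ¬ ∃ r : ℕ, r ≤ 2 * k - 1 ∧ ψ x = (φ ^ r) x := by
  rintro ⟨r, hr, hψ⟩
  have h2k : 2 ≤ 2 * k := by omega
  have hc : Commute ψ φ := by
    rw [← hsq]; exact (Commute.refl ψ).mul_right (Commute.refl ψ)
  -- φ x = φ^(2r) x
  have key : φ x = (φ ^ (2 * r)) x := by
    have h1 : φ x = ψ (ψ x) := by rw [← hsq]; rfl
    have h2 : ψ ((φ ^ r) x) = (φ ^ r) (ψ x) := by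
      have := (hc.pow_right r).eq
      calc ψ ((φ ^ r) x) = (ψ * φ ^ r) x := rfl
        _ = (φ ^ r * ψ) x := by rw [this]
        _ = (φ ^ r) (ψ x) := rfl
    rw [h1, hψ, h2, hψ]
    have : (φ ^ r) ((φ ^ r) x) = (φ ^ (2 * r)) x := by
      rw [two_mul, pow_add]; rfl
    rw [this]
  rcases Nat.eq_zero_or_pos r with hr0 | hr1
  · subst hr0
    exact hmin 1 le_rfl (by omega) (by simpa using key)
  · -- φ^(2r-1) x = x
    have hm : (φ ^ (2 * r - 1)) x = x := by
      have h : φ ((φ ^ (2 * r - 1)) x) = φ x := by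
        have : φ * φ ^ (2 * r - 1) = φ ^ (2 * r) := by
          rw [← pow_succ']; congr 1; omega
        calc φ ((φ ^ (2 * r - 1)) x) = (φ * φ ^ (2 * r - 1)) x := rfl
          _ = (φ ^ (2 * r)) x := by rw [this]
          _ = φ x := key.symm
      exact φ.injective h
    set m := 2 * r - 1 with hmdef
    -- (φ^(2k))^q fixes x
    have hfix : ∀ q : ℕ, ((φ ^ (2 * k)) ^ q) x = x := by
      intro q
      induction q with
      | zero => rfl
      | succ n ih =>
        rw [pow_succ]
        calc ((φ ^ (2 * k)) ^ n * φ ^ (2 * k)) x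
            = ((φ ^ (2 * k)) ^ n) ((φ ^ (2 * k)) x) := rfl
          _ = ((φ ^ (2 * k)) ^ n) x := by rw [hper]
          _ = x := ih
    have hs : (φ ^ (m % (2 * k))) x = x := by
      have hsplit : m = 2 * k * (m / (2 * k)) + m % (2 * k) := (Nat.div_add_mod m (2 * k)).symm
      have : (φ ^ m) x = (φ ^ (m % (2 * k))) (((φ ^ (2 * k)) ^ (m / (2 * k))) x) := by
        conv_lhs => rw [hsplit, Nat.add_comm, pow_add, pow_mul]
        rfl
      rw [hfix] at this
      rw [← this, hm]
    have hslt : m % (2 * k) < 2 * k := Nat.mod_lt _ (by omega)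
    have hsz : m % (2 * k) = 0 := by
      by_contra h
      exact hmin _ (by omega) hslt hs
    have hdvd : 2 * k ∣ m := Nat.dvd_of_mod_eq_zero hsz
    have : (2 : ℕ) ∣ m := dvd_trans ⟨k, rfl⟩ hdvd
    omega
end

section
/- Let φ : X → X be a bijection. Define the set of 2k-cycles of φ as the set of orbits {x, φ(x), …, φ^{2k−1}(x)} of points x of exact φ-period 2k. If φ = ψ² for some bijection ψ commuting with φ, then the map sending the orbit of x to the orbit of ψ(x) is a well-defined fixed-point-free involution on the set of 2k-cycles of φ. -/
/-- The set of 2k-cycles of a bijection φ: orbits of points of exact φ-period 2k. -/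
def cycles2k {X : Type*} (φ : Equiv.Perm X) (k : ℕ) : Set (Set X) :=
  {s | ∃ x : X, (φ ^ (2 * k)) x = x ∧
      (∀ j : ℕ, 1 ≤ j → j < 2 * k → (φ ^ j) x ≠ x) ∧
      s = {y | ∃ j : ℕ, j < 2 * k ∧ y = (φ ^ j) x}}

lemma pow_fix_dvd {X : Type*} (φ : Equiv.Perm X) (x : X) (n : ℕ) (hn : 0 < n)
    (h1 : (φ ^ n) x = x) (h2 : ∀ j, 1 ≤ j → j < n → (φ ^ j) x ≠ x)
    (m : ℕ) (hm : (φ ^ m) x = x) : n ∣ m := by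
  have key : ∀ q, (φ ^ (n * q)) x = x := by
    intro q
    induction q with
    | zero => simp
    | succ q ih => rw [Nat.mul_succ, pow_add, Equiv.Perm.mul_apply, h1, ih]
  have hm' : (φ ^ (m % n)) x = x := by
    have h := hm
    rw [← Nat.mod_add_div m n, pow_add, Equiv.Perm.mul_apply, key] at h
    exact h
  rcases Nat.eq_zero_or_pos (m % n) with h0 | hpos
  · exact Nat.dvd_of_mod_eq_zero h0
  · exact absurd hm' (h2 _ hpos (Nat.mod_lt _ hn))

/-- If φ = ψ², then s ↦ ψ(s) is a well-defined fixed-point-free involution on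
the set of 2k-cycles of φ. -/
theorem stmt_4 {X : Type*} (k : ℕ) (hk : 1 ≤ k) (φ ψ : Equiv.Perm X)
    (hsq : ψ * ψ = φ) (hcomm : ψ * φ = φ * ψ) :
    ∀ s ∈ cycles2k φ k,
      (⇑ψ '' s ∈ cycles2k φ k) ∧ ⇑ψ '' (⇑ψ '' s) = s ∧ ⇑ψ '' s ≠ s := by
  have hc : ∀ (j : ℕ) (y : X), ψ ((φ ^ j) y) = (φ ^ j) (ψ y) := by
    intro j y
    have h : ψ * φ ^ j = φ ^ j * ψ := Commute.pow_right hcomm j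
    calc ψ ((φ ^ j) y) = (ψ * φ ^ j) y := rfl
      _ = (φ ^ j * ψ) y := by rw [h]
      _ = (φ ^ j) (ψ y) := rfl
  intro s hs
  obtain ⟨x, h1, h2, rfl⟩ := hs
  have h2k : 0 < 2 * k := by omega
  have hdvd := pow_fix_dvd φ x (2 * k) h2k h1 h2
  have himg : ⇑ψ '' {y | ∃ j, j < 2 * k ∧ y = (φ ^ j) x}
      = {y | ∃ j, j < 2 * k ∧ y = (φ ^ j) (ψ x)} := by
    ext y
    simp only [Set.mem_image, Set.mem_setOf_eq]
    constructor
    · rintro ⟨a, ⟨j, hj, rfl⟩, rfl⟩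
      exact ⟨j, hj, hc j x⟩
    · rintro ⟨j, hj, rfl⟩
      exact ⟨(φ ^ j) x, ⟨j, hj, rfl⟩, hc j x⟩
  refine ⟨⟨ψ x, ?_, ?_, himg⟩, ?_, ?_⟩
  · rw [← hc, h1]
  · intro j hj1 hj2 hfix
    rw [← hc] at hfix
    exact h2 j hj1 hj2 (ψ.injective hfix)
  · rw [Set.image_image]
    have hψψ : (fun a => ψ (ψ a)) = ⇑φ := by funext a; rw [← hsq]; rfl
    rw [hψψ]
    ext y
    simp only [Set.mem_image, Set.mem_setOf_eq]
    constructor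
    · rintro ⟨a, ⟨j, hj, rfl⟩, rfl⟩
      by_cases h : j + 1 < 2 * k
      · exact ⟨j + 1, h, by rw [pow_succ', Equiv.Perm.mul_apply]⟩
      · have hj1 : j + 1 = 2 * k := by omega
        refine ⟨0, h2k, ?_⟩
        have : φ ((φ ^ j) x) = (φ ^ (j + 1)) x := by
          rw [pow_succ', Equiv.Perm.mul_apply]
        rw [this, hj1, h1, pow_zero]
        rfl
    · rintro ⟨j, hj, rfl⟩
      cases j with
      | zero =>
        refine ⟨(φ ^ (2 * k - 1)) x, ⟨2 * k - 1, by omega, rfl⟩, ?_⟩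
        have hstep : φ ((φ ^ (2 * k - 1)) x) = (φ ^ (2 * k - 1 + 1)) x := by
          rw [pow_succ', Equiv.Perm.mul_apply]
        rw [hstep, show 2 * k - 1 + 1 = 2 * k by omega, h1, pow_zero]
        rfl
      | succ j =>
        exact ⟨(φ ^ j) x, ⟨j, by omega, rfl⟩,
          by rw [pow_succ', Equiv.Perm.mul_apply]⟩
  · intro heq
    have hx : x ∈ {y | ∃ j, j < 2 * k ∧ y = (φ ^ j) x} := ⟨0, h2k, by simp⟩
    have hmem : ψ x ∈ {y | ∃ j, j < 2 * k ∧ y = (φ ^ j) x} :=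
      heq ▸ Set.mem_image_of_mem ψ hx
    obtain ⟨j, hj, hψx⟩ := hmem
    have hφ : φ x = (φ ^ (2 * j)) x := by
      calc φ x = ψ (ψ x) := by rw [← hsq]; rfl
        _ = ψ ((φ ^ j) x) := by rw [← hψx]
        _ = (φ ^ j) (ψ x) := hc j x
        _ = (φ ^ j) ((φ ^ j) x) := by rw [hψx]
        _ = (φ ^ (2 * j)) x := by rw [two_mul, pow_add]; rfl
    rcases Nat.eq_zero_or_pos j with hj0 | hj1
    · subst hj0
      simp only [Nat.mul_zero, pow_zero] at hφ
      exact h2 1 le_rfl (by omega) (by rwa [pow_one])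
    · have hfix : (φ ^ (2 * j - 1)) x = x := by
        apply φ.injective
        have hstep : φ ((φ ^ (2 * j - 1)) x) = (φ ^ (2 * j - 1 + 1)) x := by
          rw [pow_succ', Equiv.Perm.mul_apply]
        rw [hstep, show 2 * j - 1 + 1 = 2 * j by omega, ← hφ]
      have h2dvd : 2 ∣ 2 * j - 1 := dvd_trans ⟨k, rfl⟩ (hdvd _ hfix)
      obtain ⟨c, hc2⟩ := h2dvd
      omega
end

section
/- Let φ : X → X be a bijection that admits a square root ψ (ψ² = φ). If the set of 2k-cycles of φ is finite, then its cardinality is even. In particular, a bijection with exactly one 2k-cycle has no square root. -/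
/-! A square root `ψ` of `φ` commutes with `φ`, so `s ↦ ψ '' s` permutes the `2k`-cycles of `φ`;
it is an involution because `ψ ∘ ψ = φ` maps every cycle onto itself. It fixes no cycle: if
`ψ x = φ^a x`, then `φ x = φ^(2a) x`, so the period `2k` would divide the odd number
`2a + 2k - 1`. -/

theorem Set.Finite.even_ncard_of_involution {α : Type*} {s : Set α} (hs : s.Finite)
    {g : α → α} (hmaps : Set.MapsTo g s s) (hinv : ∀ a ∈ s, g (g a) = a)
    (hfree : ∀ a ∈ s, g a ≠ a) : Even s.ncard := by
  classical
  have hsum : ∑ _a ∈ hs.toFinset, (1 : ZMod 2) = 0 :=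
    Finset.sum_involution (fun a _ => g a) (fun _ _ => by decide)
      (fun a ha _ => hfree a (hs.mem_toFinset.1 ha))
      (fun a ha => hs.mem_toFinset.2 (hmaps (hs.mem_toFinset.1 ha)))
      (fun a ha => hinv a (hs.mem_toFinset.1 ha))
  rwa [Finset.sum_const, nsmul_one, ← Set.ncard_eq_toFinset_card s hs,
    ZMod.natCast_eq_zero_iff_even] at hsum

namespace Equiv.Perm

variable {X : Type*} {φ σ : Perm X} {x : X} {n : ℕ}

theorem apply_pow_apply_of_commute (hσ : Commute σ φ) (j : ℕ) (x : X) :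
    σ ((φ ^ j) x) = (φ ^ j) (σ x) :=
  congrArg (· x) (hσ.pow_right j).eq

theorem pow_apply_eq_pow_mod_apply (hx : (φ ^ n) x = x) (m : ℕ) :
    (φ ^ m) x = (φ ^ (m % n)) x := by
  conv_lhs => rw [← Nat.mod_add_div m n, pow_add, pow_mul, mul_apply,
    pow_apply_eq_self_of_apply_eq_self hx]

theorem dvd_of_pow_apply_eq_self (hn : 0 < n) (hx : (φ ^ n) x = x)
    (hmin : ∀ j, 1 ≤ j → j < n → (φ ^ j) x ≠ x) {m : ℕ} (hm : (φ ^ m) x = x) : n ∣ m := by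
  by_contra hdvd
  rw [Nat.dvd_iff_mod_eq_zero] at hdvd
  exact hmin (m % n) (Nat.pos_of_ne_zero hdvd) (Nat.mod_lt m hn)
    (pow_apply_eq_pow_mod_apply hx m ▸ hm)

theorem setOf_pow_apply_lt_eq_range (hn : 0 < n) (hx : (φ ^ n) x = x) :
    {y | ∃ j, j < n ∧ y = (φ ^ j) x} = Set.range fun j : ℕ => (φ ^ j) x := by
  ext y
  constructor
  · rintro ⟨j, -, rfl⟩
    exact ⟨j, rfl⟩
  · rintro ⟨j, rfl⟩
    exact ⟨j % n, Nat.mod_lt j hn, pow_apply_eq_pow_mod_apply hx j⟩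

theorem image_range_pow_apply (hσ : Commute σ φ) (x : X) :
    σ '' Set.range (fun j : ℕ => (φ ^ j) x) = Set.range fun j : ℕ => (φ ^ j) (σ x) := by
  rw [← Set.range_comp]
  exact congrArg Set.range (funext fun j => apply_pow_apply_of_commute hσ j x)

theorem image_self_range_pow_apply (hn : 0 < n) (hx : (φ ^ n) x = x) :
    φ '' Set.range (fun j : ℕ => (φ ^ j) x) = Set.range fun j : ℕ => (φ ^ j) x := by
  rw [image_range_pow_apply (Commute.refl φ)]
  ext y
  constructor
  · rintro ⟨j, rfl⟩
    exact ⟨j + 1, by simp only [pow_succ, mul_apply]⟩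
  · rintro ⟨j, rfl⟩
    refine ⟨j + n - 1, ?_⟩
    dsimp only
    rw [← mul_apply, ← pow_succ, Nat.sub_add_cancel (by omega), pow_add, mul_apply, hx]

end Equiv.Perm

section cycles2k

open Equiv.Perm

variable {X : Type*} {φ : Equiv.Perm X} {k : ℕ} {s : Set X}

theorem mem_cycles2k_iff (hk : 1 ≤ k) :
    s ∈ cycles2k φ k ↔ ∃ x : X, (φ ^ (2 * k)) x = x ∧
      (∀ j : ℕ, 1 ≤ j → j < 2 * k → (φ ^ j) x ≠ x) ∧ s = Set.range fun j : ℕ => (φ ^ j) x :=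
  exists_congr fun _ => and_congr_right fun hx => and_congr_right fun _ => by
    rw [setOf_pow_apply_lt_eq_range (by omega) hx]

theorem image_mem_cycles2k {σ : Equiv.Perm X} (hk : 1 ≤ k) (hσ : Commute σ φ)
    (hs : s ∈ cycles2k φ k) : σ '' s ∈ cycles2k φ k := by
  obtain ⟨x, hx, hmin, rfl⟩ := (mem_cycles2k_iff hk).1 hs
  refine (mem_cycles2k_iff hk).2 ⟨σ x, ?_, fun j hj1 hj2 h => ?_, image_range_pow_apply hσ x⟩
  · rw [← apply_pow_apply_of_commute hσ, hx]
  · rw [← apply_pow_apply_of_commute hσ] at h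
    exact hmin j hj1 hj2 (σ.injective h)

theorem image_eq_self_of_mem_cycles2k (hk : 1 ≤ k) (hs : s ∈ cycles2k φ k) : φ '' s = s := by
  obtain ⟨x, hx, -, rfl⟩ := (mem_cycles2k_iff hk).1 hs
  exact image_self_range_pow_apply (by omega) hx

theorem image_ne_self_of_mul_self_eq {ψ : Equiv.Perm X} (hk : 1 ≤ k) (hsq : ψ * ψ = φ)
    (hs : s ∈ cycles2k φ k) : ψ '' s ≠ s := by
  obtain ⟨x, hx, hmin, rfl⟩ := (mem_cycles2k_iff hk).1 hs
  intro hfix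
  obtain ⟨a, ha : (φ ^ a) x = ψ x⟩ : ψ x ∈ Set.range fun j : ℕ => (φ ^ j) x :=
    hfix ▸ ⟨x, ⟨0, rfl⟩, rfl⟩
  have hψ : Commute ψ φ := hsq ▸ (Commute.refl ψ).mul_right (Commute.refl ψ)
  have hφx : φ x = (φ ^ (a + a)) x :=
    calc φ x = ψ (ψ x) := by rw [← hsq, mul_apply]
      _ = (φ ^ a) ((φ ^ a) x) := by rw [← ha, apply_pow_apply_of_commute hψ, ha]
      _ = (φ ^ (a + a)) x := by rw [pow_add, mul_apply]
  have hper : (φ ^ (2 * k - 1 + (a + a))) x = x := by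
    rw [pow_add, mul_apply, ← hφx, ← mul_apply, ← pow_succ, Nat.sub_add_cancel (by omega), hx]
  have h2 : 2 ∣ 2 * k - 1 + (a + a) :=
    (dvd_mul_right 2 k).trans (dvd_of_pow_apply_eq_self (by omega) hx hmin hper)
  omega

end cycles2k

/-- If φ admits a square root, then its (finite) set of 2k-cycles has even
cardinality; in particular the number of 2k-cycles is never exactly one. -/
theorem stmt_5 {X : Type*} (k : ℕ) (hk : 1 ≤ k) (φ ψ : Equiv.Perm X)
    (hsq : ψ * ψ = φ) :
    ((cycles2k φ k).Finite → Even (cycles2k φ k).ncard) ∧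
      (cycles2k φ k).ncard ≠ 1 := by
  have hψ : Commute ψ φ := hsq ▸ (Commute.refl ψ).mul_right (Commute.refl ψ)
  have heven (hfin : (cycles2k φ k).Finite) : Even (cycles2k φ k).ncard :=
    hfin.even_ncard_of_involution (g := (ψ '' ·))
      (fun _ hs => image_mem_cycles2k hk hψ hs)
      (fun s hs => by
        rw [← Set.image_comp, ← Equiv.Perm.coe_mul, hsq, image_eq_self_of_mem_cycles2k hk hs])
      (fun _ hs => image_ne_self_of_mul_self_eq hk hsq hs)
  refine ⟨heven, fun h1 => ?_⟩
  exact Nat.not_even_one (h1 ▸ heven (Set.finite_of_ncard_pos (by omega)))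
end

section
/- Let φ : X → X be a bijection of a set X, x ∈ X with φ(x) ≠ x but φ²(x) = x (a 2-cycle). If ψ is a bijection with ψ² = φ, then {x, φ(x)} and {ψ(x), ψφ(x)} are disjoint 2-cycles of φ. Hence a bijection with exactly one 2-cycle (exactly one orbit of size 2) admits no square root. -/
/-- The set of 2-cycles (orbits of size 2) of a bijection φ. -/
def twoCycles {X : Type*} (φ : Equiv.Perm X) : Set (Set X) :=
  {s | ∃ x : X, φ x ≠ x ∧ φ (φ x) = x ∧ s = {x, φ x}}

/-- If ψ² = φ and {x, φ(x)} is a 2-cycle of φ, then {ψ(x), ψ(φ(x))} is a 2-cycle of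
φ disjoint from it; hence a bijection with exactly one 2-cycle has no square root. -/
theorem stmt_17 {X : Type*} (φ : Equiv.Perm X) :
    (∀ ψ : Equiv.Perm X, ψ * ψ = φ → ∀ x : X, φ x ≠ x → φ (φ x) = x →
      ({ψ x, ψ (φ x)} : Set X) ∈ twoCycles φ ∧
      Disjoint ({x, φ x} : Set X) ({ψ x, ψ (φ x)} : Set X)) ∧
    ((twoCycles φ).ncard = 1 → ¬ ∃ ψ : Equiv.Perm X, ψ * ψ = φ) := by
  have main : ∀ ψ : Equiv.Perm X, ψ * ψ = φ → ∀ x : X, φ x ≠ x → φ (φ x) = x →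
      ({ψ x, ψ (φ x)} : Set X) ∈ twoCycles φ ∧
      Disjoint ({x, φ x} : Set X) ({ψ x, ψ (φ x)} : Set X) := by
    intro ψ hψ x hne hsq
    have hφ : ∀ y, φ y = ψ (ψ y) := by
      intro y; rw [← hψ]; rfl
    have hcomm : ∀ y, φ (ψ y) = ψ (φ y) := by
      intro y; rw [hφ, hφ]
    have h1 : ψ x ≠ x := by
      intro h; apply hne; rw [hφ, h, h]
    have h2 : ψ x ≠ φ x := by
      intro h
      have : ψ x = ψ (ψ x) := h.trans (hφ x)
      exact h1 (ψ.injective this).symm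
    have h3 : ψ (φ x) ≠ x := by
      intro h
      have : ψ x = φ (φ x) := by rw [hφ, h]
      rw [hsq] at this
      exact h1 this
    have h4 : ψ (φ x) ≠ φ x := by
      intro h
      have hx : x = ψ (ψ (φ x)) := by rw [← hφ, hsq]
      rw [h, h] at hx
      exact hne hx.symm
    constructor
    · refine ⟨ψ x, ?_, ?_, ?_⟩
      · rw [hcomm]; intro h; exact hne (ψ.injective h)
      · rw [hcomm, hcomm, hsq]
      · rw [hcomm]
    · rw [Set.disjoint_iff_inter_eq_empty]
      ext y
      simp only [Set.mem_inter_iff, Set.mem_insert_iff, Set.mem_singleton_iff,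
        Set.mem_empty_iff_false, iff_false, not_and, not_or]
      rintro (rfl | rfl)
      · exact ⟨fun h => h1 h.symm, fun h => h3 h.symm⟩
      · exact ⟨fun h => h2 h.symm, fun h => h4 h.symm⟩
  refine ⟨main, ?_⟩
  intro hcard ⟨ψ, hψ⟩
  obtain ⟨s, hs⟩ := Set.ncard_eq_one.mp hcard
  have hsmem : s ∈ twoCycles φ := hs ▸ rfl
  obtain ⟨x, hne, hsq, rfl⟩ := hsmem
  obtain ⟨hmem, hdis⟩ := main ψ hψ x hne hsq
  have h2 : ({ψ x, ψ (φ x)} : Set X) = {x, φ x} := by rw [hs] at hmem; exact hmem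
  rw [h2] at hdis
  exact (Set.disjoint_left.mp hdis (by left; rfl)) (by left; rfl)
end
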